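/- Let p be a nonzero integer, H_p = f_p(H), H′ = N the normal closure of x in H, and for z ∈ H set Γ(z) = f_p⁻¹(z H_p z⁻¹). Let z ∈ H ∖ H_p. If z ∈ H_p h H_p for some h ∈ H′, then Γ(z) = H′. If z ∈ H_p tᵏ H_p for some integer k, then Γ(z) is conjugate in H to the cyclic subgroup generated by t. In all other cases Γ(z) is the trivial subgroup. In particular, Γ(z) is a free abelian group for every z ∈ H ∖ H_p. -/

import Mathlib

open Finsupp Multiplicative

/-- The shift automorphism of the free abelian group `ℤ →₀ ℤ`, sending the basis element
`single n 1` (i.e. `x_n`) to `single (n + 1) 1` (i.e. `x_{n+1}`). -/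
noncomputable def shiftAut : Multiplicative (ℤ →₀ ℤ) ≃* Multiplicative (ℤ →₀ ℤ) :=
  AddEquiv.toMultiplicative (Finsupp.domCongr (Equiv.addRight (1 : ℤ)))

/-- The action of `ℤ` on the free abelian group `ℤ →₀ ℤ` by shifting. -/
noncomputable def shiftHom : Multiplicative ℤ →* MulAut (Multiplicative (ℤ →₀ ℤ)) :=
  zpowersHom _ (shiftAut : MulAut (Multiplicative (ℤ →₀ ℤ)))

/-- The wreath product `H = ℤ ≀ ℤ`: the semidirect product of the free abelian group `N`
with basis `{x_n : n ∈ ℤ}` (multiplicative `ℤ →₀ ℤ`) by an infinite cyclic group `⟨t⟩`,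
where conjugation by `t` sends `x_n` to `x_{n+1}`. -/
noncomputable abbrev Hgrp : Type :=
  Multiplicative (ℤ →₀ ℤ) ⋊[shiftHom] Multiplicative ℤ

/-- The element `x_n = tⁿ x t⁻ⁿ` of `H`. -/
noncomputable def xE (n : ℤ) : Hgrp :=
  SemidirectProduct.inl (Multiplicative.ofAdd (Finsupp.single n 1))

/-- The element `t` of `H`. -/
noncomputable def tE : Hgrp :=
  SemidirectProduct.inr (Multiplicative.ofAdd 1)

noncomputable def S : Multiplicative ℤ →* MulAut (Multiplicative (ℤ →₀ ℤ)) :=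
  MonoidHom.mk' (fun k => AddEquiv.toMultiplicative (Finsupp.domCongr (Equiv.addRight (toAdd k))))
    (by
      intro k l
      ext a : 1
      show Finsupp.domCongr (M := ℤ) (Equiv.addRight (toAdd (k * l))) _ = _
      ext j
      show a _ = (equivMapDomain (Equiv.addRight (toAdd k)) (equivMapDomain (Equiv.addRight (toAdd l)) (toAdd a))) j
      rw [Finsupp.equivMapDomain_apply, Finsupp.equivMapDomain_apply]
      simp [Equiv.Perm.mul_def, Equiv.symm_trans_apply, toAdd_mul]
      ring_nf)

lemma shiftHom_eq_S : shiftHom = S := by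
  apply MonoidHom.ext_mint
  rfl

lemma shiftHom_apply (k : ℤ) (a : ℤ →₀ ℤ) (j : ℤ) :
    toAdd (shiftHom (ofAdd k) (ofAdd a)) j = a (j - k) := by
  rw [shiftHom_eq_S]
  show (Finsupp.domCongr (M := ℤ) (Equiv.addRight k) a) j = a (j - k)
  simp [Finsupp.domCongr_apply, Finsupp.equivMapDomain_apply, sub_eq_add_neg]

open SemidirectProduct

lemma tE_zpow (k : ℤ) : tE ^ k = inr (ofAdd k) := by
  rw [tE, ← map_zpow]
  congr 1
  rw [← ofAdd_zsmul]
  norm_num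

lemma xE_eq (n : ℤ) : xE n = tE ^ n * xE 0 * (tE ^ n)⁻¹ := by
  rw [tE_zpow, xE, xE, ← map_inv, ← inl_aut]
  congr 1
  apply Multiplicative.toAdd.injective
  ext j
  rw [shiftHom_apply]
  simp only [toAdd_ofAdd, Finsupp.single_apply]
  omega

section
variable (p : ℤ) (f : Hgrp →* Hgrp)
  (hfx : f (xE 0) = xE 0) (hft : f tE = tE ^ p)

noncomputable def phi : (ℤ →₀ ℤ) →+ (ℤ →₀ ℤ) :=
  Finsupp.mapDomain.addMonoidHom (fun n => p * n)

lemma phi_injective_aux (hp : p ≠ 0) : Function.Injective (fun n => p * n : ℤ → ℤ) :=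
  fun a b h => by dsimp at h; exact mul_left_cancel₀ hp h

lemma phi_apply_mul (hp : p ≠ 0) (a : ℤ →₀ ℤ) (j : ℤ) : phi p a (p * j) = a j := by
  exact Finsupp.mapDomain_apply (phi_injective_aux p hp) a j

lemma phi_apply_not_dvd (a : ℤ →₀ ℤ) (j : ℤ) (h : ¬ p ∣ j) : phi p a j = 0 := by
  apply Finsupp.mapDomain_notin_range
  rintro ⟨i, rfl⟩
  exact h ⟨i, rfl⟩

include hfx hft in
lemma f_xE (n : ℤ) : f (xE n) = xE (p * n) := by
  rw [xE_eq n]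
  simp only [map_mul, map_inv, map_zpow, hfx, hft]
  rw [← zpow_mul, ← xE_eq]

include hfx hft in
lemma f_mk (b : ℤ →₀ ℤ) (k : ℤ) :
    f ⟨ofAdd b, ofAdd k⟩ = ⟨ofAdd (phi p b), ofAdd (p * k)⟩ := by
  have h1 : ∀ b : ℤ →₀ ℤ, f (inl (ofAdd b)) = inl (ofAdd (phi p b)) := by
    intro b
    induction b using Finsupp.induction with
    | zero => simp
    | single_add n c rest hn hc ih =>
      rw [ofAdd_add, map_mul, map_mul, ih, map_add, ofAdd_add, map_mul]
      congr 1
      have hs : (ofAdd (Finsupp.single n c) : Multiplicative (ℤ →₀ ℤ))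
          = ofAdd (Finsupp.single n 1) ^ c := by
        rw [← ofAdd_zsmul]; congr 1; rw [Finsupp.smul_single]; norm_num
      have hs' : (ofAdd (phi p (Finsupp.single n c)) : Multiplicative (ℤ →₀ ℤ))
          = ofAdd (Finsupp.single (p * n) 1) ^ c := by
        rw [← ofAdd_zsmul]; congr 1
        rw [phi, Finsupp.mapDomain.addMonoidHom_apply, Finsupp.mapDomain_single,
          Finsupp.smul_single]
        norm_num
      rw [hs, hs', map_zpow SemidirectProduct.inl _ c, map_zpow f _ c,
        map_zpow SemidirectProduct.inl _ c]
      exact congrArg (· ^ c) (f_xE p f hfx hft n)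
  calc f ⟨ofAdd b, ofAdd k⟩ = f (inl (ofAdd b)) * f (tE ^ k) := by
        rw [← map_mul, tE_zpow, mk_eq_inl_mul_inr]
    _ = inl (ofAdd (phi p b)) * tE ^ (p * k) := by
        rw [h1, map_zpow, hft, ← zpow_mul]
    _ = ⟨ofAdd (phi p b), ofAdd (p * k)⟩ := by
        rw [tE_zpow, mk_eq_inl_mul_inr]

end

section
variable (p : ℤ) (f : Hgrp →* Hgrp)

lemma shiftHom_apply' (k : Multiplicative ℤ) (a : Multiplicative (ℤ →₀ ℤ)) (j : ℤ) :
    toAdd (shiftHom k a) j = toAdd a (j - toAdd k) := shiftHom_apply _ _ _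

lemma conj_left (z w : Hgrp) (j : ℤ) :
    toAdd (z⁻¹ * w * z).left j
      = toAdd w.left (j + toAdd z.right) - toAdd z.left (j + toAdd z.right)
        + toAdd z.left (j + toAdd z.right - toAdd w.right) := by
  simp only [SemidirectProduct.mul_left, SemidirectProduct.mul_right,
    SemidirectProduct.inv_left, SemidirectProduct.inv_right,
    toAdd_mul, Finsupp.add_apply, shiftHom_apply', toAdd_inv, Finsupp.neg_apply]
  ring_nf

lemma conj_right (z w : Hgrp) :
    toAdd (z⁻¹ * w * z).right = toAdd w.right := by
  simp only [SemidirectProduct.mul_right, SemidirectProduct.inv_right, toAdd_mul, toAdd_inv]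
  ring

variable (hfx : f (xE 0) = xE 0) (hft : f tE = tE ^ p)

include hfx hft in
lemma mem_range_iff (hp : p ≠ 0) (g : Hgrp) :
    g ∈ f.range ↔ (∀ j, ¬ p ∣ j → toAdd g.left j = 0) ∧ p ∣ toAdd g.right := by
  constructor
  · rintro ⟨w, rfl⟩
    have hw : f w = ⟨ofAdd (phi p (toAdd w.left)), ofAdd (p * toAdd w.right)⟩ :=
      f_mk p f hfx hft (toAdd w.left) (toAdd w.right)
    rw [hw]
    exact ⟨fun j hj => phi_apply_not_dvd p _ j hj, ⟨toAdd w.right, rfl⟩⟩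
  · rintro ⟨h1, ⟨k', hk⟩⟩
    refine ⟨⟨ofAdd (Finsupp.comapDomain (fun n => p * n) (toAdd g.left)
      ((phi_injective_aux p hp).injOn)), ofAdd k'⟩, ?_⟩
    rw [f_mk p f hfx hft]
    refine SemidirectProduct.ext ?_ ?_
    · apply Multiplicative.toAdd.injective
      ext j
      show phi p _ j = toAdd g.left j
      by_cases hd : p ∣ j
      · obtain ⟨j', rfl⟩ := hd
        rw [phi_apply_mul p hp]
        rfl
      · rw [phi_apply_not_dvd p _ j hd, h1 j hd]
    · show ofAdd (p * k') = g.right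
      rw [← hk]
      rfl

include hfx hft in
lemma mem_gamma_iff (hp : p ≠ 0) (z : Hgrp) (Γ : Subgroup Hgrp)
    (hΓ : Γ = Subgroup.comap f (Subgroup.map (MulAut.conj z).toMonoidHom f.range))
    (g : Hgrp) :
    g ∈ Γ ↔ ∀ j : ℤ, ¬ p ∣ (j - toAdd z.right) →
      phi p (toAdd g.left) j
        = toAdd z.left j - toAdd z.left (j - p * toAdd g.right) := by
  rw [hΓ, Subgroup.mem_comap, Subgroup.mem_map_equiv]
  have hsymm : (MulAut.conj z).symm (f g) = z⁻¹ * f g * z := by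
    simp [MulAut.conj_symm_apply, mul_assoc]
  rw [hsymm, mem_range_iff p f hfx hft hp]
  have hfg : f g = ⟨ofAdd (phi p (toAdd g.left)), ofAdd (p * toAdd g.right)⟩ :=
    f_mk p f hfx hft (toAdd g.left) (toAdd g.right)
  have hr : p ∣ toAdd (z⁻¹ * f g * z).right := by
    rw [conj_right, hfg]
    exact ⟨toAdd g.right, rfl⟩
  constructor
  · rintro ⟨hl, -⟩ j hj
    have := hl (j - toAdd z.right) hj
    rw [conj_left, hfg] at this
    simp only [toAdd_ofAdd] at this
    have harg : j - toAdd z.right + toAdd z.right = j := by ring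
    rw [harg] at this
    linarith [this]
  · intro hcond
    refine ⟨fun j hj => ?_, hr⟩
    rw [conj_left, hfg]
    simp only [toAdd_ofAdd]
    have := hcond (j + toAdd z.right) (by simpa using hj)
    show phi p (toAdd g.left) (j + toAdd z.right) - _ + _ = 0
    rw [this]
    ring_nf

lemma mul3_left (u v w : Hgrp) (j : ℤ) :
    toAdd (u * v * w).left j
      = toAdd u.left j + toAdd v.left (j - toAdd u.right)
        + toAdd w.left (j - toAdd u.right - toAdd v.right) := by
  simp only [SemidirectProduct.mul_left, SemidirectProduct.mul_right,
    toAdd_mul, Finsupp.add_apply, shiftHom_apply']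
  ring_nf

lemma mul3_right (u v w : Hgrp) :
    toAdd (u * v * w).right = toAdd u.right + toAdd v.right + toAdd w.right := by
  simp only [SemidirectProduct.mul_right, toAdd_mul]

lemma normalClosure_xE :
    Subgroup.normalClosure {xE 0}
      = (SemidirectProduct.rightHom : Hgrp →* Multiplicative ℤ).ker := by
  apply le_antisymm
  · apply Subgroup.normalClosure_le_normal
    intro g hg
    rw [Set.mem_singleton_iff] at hg
    subst hg
    show SemidirectProduct.rightHom (xE 0) = 1
    exact SemidirectProduct.rightHom_inl _
  · intro g hg
    rw [MonoidHom.mem_ker] at hg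
    have hgeq : g = inl g.left := by
      refine SemidirectProduct.ext rfl ?_
      rw [SemidirectProduct.right_inl]
      exact hg
    rw [hgeq]
    generalize (g.left : Multiplicative (ℤ →₀ ℤ)) = a
    have : ∀ b : ℤ →₀ ℤ, (inl (ofAdd b) : Hgrp) ∈ Subgroup.normalClosure {xE 0} := by
      intro b
      induction b using Finsupp.induction with
      | zero =>
        rw [ofAdd_zero, map_one]
        exact Subgroup.one_mem _
      | single_add n c rest hn hc ih =>
        rw [ofAdd_add, map_mul]
        refine Subgroup.mul_mem _ ?_ ih
        have hs : (inl (ofAdd (Finsupp.single n c)) : Hgrp) = xE n ^ c := by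
          rw [xE, ← map_zpow]
          congr 1
          rw [← ofAdd_zsmul]
          congr 1
          rw [Finsupp.smul_single]
          norm_num
        rw [hs]
        apply Subgroup.zpow_mem
        have hmem := Subgroup.Normal.conj_mem Subgroup.normalClosure_normal (xE 0)
          (Subgroup.subset_normalClosure (Set.mem_singleton _)) (tE ^ n)
        rw [← xE_eq n] at hmem
        exact hmem
    exact this (toAdd a)

lemma finsupp_escape (c : ℤ →₀ ℤ) (j₀ d : ℤ) (hd : d ≠ 0)
    (h : ∀ i : ℕ, c (j₀ - i * d) = c j₀) : c j₀ = 0 := by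
  by_contra hne
  have hinj : Function.Injective (fun i : ℕ => j₀ - i * d) := by
    intro a b hab
    simp only at hab
    have : (a : ℤ) * d = b * d := by omega
    exact_mod_cast mul_right_cancel₀ hd this
  have hsub : Set.range (fun i : ℕ => j₀ - i * d) ⊆ ↑c.support := by
    rintro _ ⟨i, rfl⟩
    simp only [Finset.mem_coe, Finsupp.mem_support_iff]
    rw [h i]
    exact hne
  exact (Set.infinite_range_of_injective hinj) (c.support.finite_toSet.subset hsub)

include hfx hft in
lemma gamma_case1 (hp : p ≠ 0) (z : Hgrp) (hz : z ∉ f.range) (hm : p ∣ toAdd z.right)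
    (Γ : Subgroup Hgrp)
    (hΓ : Γ = Subgroup.comap f (Subgroup.map (MulAut.conj z).toMonoidHom f.range)) :
    Γ = (SemidirectProduct.rightHom : Hgrp →* Multiplicative ℤ).ker := by
  obtain ⟨m', hm'⟩ := hm
  have hj₀ : ∃ j₀, ¬ p ∣ j₀ ∧ toAdd z.left j₀ ≠ 0 := by
    by_contra hcon
    push_neg at hcon
    exact hz ((mem_range_iff p f hfx hft hp z).mpr ⟨hcon, ⟨m', hm'⟩⟩)
  obtain ⟨j₀, hj₀d, hj₀ne⟩ := hj₀
  ext g
  rw [mem_gamma_iff p f hfx hft hp z Γ hΓ g, MonoidHom.mem_ker]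
  have hker : (SemidirectProduct.rightHom g = 1) ↔ toAdd g.right = 0 := by
    constructor
    · intro h; rw [show g.right = 1 from h, toAdd_one]
    · intro h; show g.right = 1; apply Multiplicative.toAdd.injective; rw [h, toAdd_one]
  rw [hker]
  constructor
  · intro hcond
    by_contra hn0
    have key : ∀ i : ℕ, toAdd z.left (j₀ - i * (p * toAdd g.right)) = toAdd z.left j₀ := by
      intro i
      induction i with
      | zero => norm_num
      | succ i ih =>
        have hdvd : ¬ p ∣ (j₀ - i * (p * toAdd g.right) - toAdd z.right) := by
          rintro ⟨q, hq⟩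
          exact hj₀d ⟨q + m' + i * toAdd g.right, by linarith⟩
        have hstep := hcond (j₀ - i * (p * toAdd g.right)) hdvd
        have hnd : ¬ p ∣ (j₀ - i * (p * toAdd g.right)) := by
          rintro ⟨q, hq⟩
          exact hj₀d ⟨q + i * toAdd g.right, by linarith⟩
        rw [phi_apply_not_dvd p _ _ hnd] at hstep
        have harg : j₀ - i * (p * toAdd g.right) - p * toAdd g.right
            = j₀ - (i + 1 : ℕ) * (p * toAdd g.right) := by push_cast; ring
        rw [harg] at hstep
        rw [← ih]
        linarith [hstep]
    exact hj₀ne (finsupp_escape (toAdd z.left) j₀ (p * toAdd g.right)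
      (mul_ne_zero hp hn0) key)
  · intro hn j hj
    have hnd : ¬ p ∣ j := by
      rintro ⟨q, hq⟩
      exact hj ⟨q - m', by linarith⟩
    rw [phi_apply_not_dvd p _ j hnd, hn, mul_zero, sub_zero, sub_self]

include hfx hft in
lemma gamma_case2 (hp : p ≠ 0) (z : Hgrp) (hm : ¬ p ∣ toAdd z.right)
    (hsupp : ∀ j, toAdd z.left j ≠ 0 → p ∣ j ∨ p ∣ (j - toAdd z.right))
    (Γ : Subgroup Hgrp)
    (hΓ : Γ = Subgroup.comap f (Subgroup.map (MulAut.conj z).toMonoidHom f.range)) :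
    ∃ w : Hgrp, Γ = Subgroup.map (MulAut.conj w).toMonoidHom (Subgroup.zpowers tE) := by
  have hinj := (phi_injective_aux p hp).injOn
    (s := (fun n => p * n) ⁻¹' ↑(toAdd z.left).support)
  set d : ℤ →₀ ℤ := Finsupp.comapDomain (fun n => p * n) (toAdd z.left) hinj with hd
  have hdap : ∀ j, d j = toAdd z.left (p * j) := fun j => rfl
  set w : Hgrp := inl (ofAdd d) with hw
  have hwl : toAdd w.left = d := rfl
  have hwr : toAdd w.right = 0 := rfl
  refine ⟨w, ?_⟩
  ext g
  rw [mem_gamma_iff p f hfx hft hp z Γ hΓ g, Subgroup.mem_map_equiv]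
  have hsymm : (MulAut.conj w).symm g = w⁻¹ * g * w := by
    simp [mul_assoc]
  rw [hsymm, Subgroup.mem_zpowers_iff]
  have hconjl : ∀ j, toAdd (w⁻¹ * g * w).left j
      = toAdd g.left j - d j + d (j - toAdd g.right) := by
    intro j
    rw [conj_left, hwl, hwr, add_zero]
  have hconjr : toAdd (w⁻¹ * g * w).right = toAdd g.right := conj_right w g
  constructor
  · intro hcond
    refine ⟨toAdd g.right, ?_⟩
    rw [tE_zpow]
    symm
    refine SemidirectProduct.ext ?_ ?_
    · apply Multiplicative.toAdd.injective
      ext j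
      rw [hconjl j]
      have hnd : ¬ p ∣ (p * j - toAdd z.right) := by
        rintro ⟨q, hq⟩
        exact hm ⟨j - q, by linarith⟩
      have := hcond (p * j) hnd
      rw [phi_apply_mul p hp] at this
      have h2 : d (j - toAdd g.right) = toAdd z.left (p * j - p * toAdd g.right) := by
        rw [hdap]; ring_nf
      rw [this, hdap, h2]
      show _ = toAdd (1 : Multiplicative (ℤ →₀ ℤ)) j
      rw [toAdd_one, Finsupp.zero_apply]
      ring
    · apply Multiplicative.toAdd.injective
      rw [hconjr]
      rfl
  · rintro ⟨n, hne⟩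
    have hright : toAdd g.right = n := by
      have h := congrArg (fun u : Hgrp => toAdd u.right) hne
      rw [hconjr, tE_zpow] at h
      rw [← h]
      rfl
    have hleft : ∀ j', toAdd g.left j' = d j' - d (j' - n) := by
      intro j'
      have h := congrArg (fun u : Hgrp => toAdd u.left j') hne
      rw [hconjl j', tE_zpow, hright] at h
      have h0 : toAdd ((inr (ofAdd n) : Hgrp).left) j' = 0 := by
        rw [SemidirectProduct.left_inr, toAdd_one, Finsupp.zero_apply]
      rw [h0] at h
      linarith [h]
    intro j hj
    by_cases hdj : p ∣ j
    · obtain ⟨j', rfl⟩ := hdj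
      rw [phi_apply_mul p hp, hleft j', hright]
      have h2 : d (j' - n) = toAdd z.left (p * j' - p * n) := by
        rw [hdap]; ring_nf
      rw [hdap, h2]
    · rw [phi_apply_not_dvd p _ j hdj]
      have h1 : toAdd z.left j = 0 := by
        by_contra hcc
        rcases hsupp j hcc with h | h
        · exact hdj h
        · exact hj h
      have h2 : toAdd z.left (j - p * toAdd g.right) = 0 := by
        by_contra hcc
        rcases hsupp _ hcc with ⟨q, hq⟩ | ⟨q, hq⟩
        · exact hdj ⟨q + toAdd g.right, by linarith⟩
        · exact hj ⟨q + toAdd g.right, by linarith⟩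
      rw [h1, h2]
      norm_num

include hfx hft in
lemma gamma_case3 (hp : p ≠ 0) (z : Hgrp) (hm : ¬ p ∣ toAdd z.right)
    (j₀ : ℤ) (hj₀1 : ¬ p ∣ j₀) (hj₀2 : ¬ p ∣ (j₀ - toAdd z.right))
    (hj₀3 : toAdd z.left j₀ ≠ 0)
    (Γ : Subgroup Hgrp)
    (hΓ : Γ = Subgroup.comap f (Subgroup.map (MulAut.conj z).toMonoidHom f.range)) :
    Γ = ⊥ := by
  rw [eq_bot_iff]
  intro g hg
  rw [mem_gamma_iff p f hfx hft hp z Γ hΓ g] at hg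
  have hn : toAdd g.right = 0 := by
    by_contra hn0
    have key : ∀ i : ℕ, toAdd z.left (j₀ - i * (p * toAdd g.right)) = toAdd z.left j₀ := by
      intro i
      induction i with
      | zero => norm_num
      | succ i ih =>
        have hdvd : ¬ p ∣ (j₀ - i * (p * toAdd g.right) - toAdd z.right) := by
          rintro ⟨q, hq⟩
          exact hj₀2 ⟨q + i * toAdd g.right, by linarith⟩
        have hstep := hg (j₀ - i * (p * toAdd g.right)) hdvd
        have hnd : ¬ p ∣ (j₀ - i * (p * toAdd g.right)) := by
          rintro ⟨q, hq⟩
          exact hj₀1 ⟨q + i * toAdd g.right, by linarith⟩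
        rw [phi_apply_not_dvd p _ _ hnd] at hstep
        have harg : j₀ - i * (p * toAdd g.right) - p * toAdd g.right
            = j₀ - (i + 1 : ℕ) * (p * toAdd g.right) := by push_cast; ring
        rw [harg] at hstep
        rw [← ih]
        linarith [hstep]
    exact hj₀3 (finsupp_escape (toAdd z.left) j₀ (p * toAdd g.right)
      (mul_ne_zero hp hn0) key)
  have hleft : toAdd g.left = 0 := by
    ext j'
    have hnd : ¬ p ∣ (p * j' - toAdd z.right) := by
      rintro ⟨q, hq⟩
      exact hm ⟨j' - q, by linarith⟩
    have := hg (p * j') hnd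
    rw [phi_apply_mul p hp, hn, mul_zero, sub_zero, sub_self] at this
    rw [this, Finsupp.zero_apply]
  rw [Subgroup.mem_bot]
  refine SemidirectProduct.ext ?_ ?_
  · apply Multiplicative.toAdd.injective
    rw [hleft]
    rfl
  · apply Multiplicative.toAdd.injective
    rw [hn]
    rfl

include hfx hft in
lemma coset1_iff (hp : p ≠ 0) (z : Hgrp) :
    (∃ h ∈ Subgroup.normalClosure {xE 0}, ∃ a ∈ f.range, ∃ b ∈ f.range, z = a * h * b)
      ↔ p ∣ toAdd z.right := by
  constructor
  · rintro ⟨h, hh, a, ha, b, hb, rfl⟩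
    rw [mul3_right]
    have hhr : toAdd h.right = 0 := by
      rw [normalClosure_xE, MonoidHom.mem_ker] at hh
      rw [show h.right = 1 from hh, toAdd_one]
    rw [hhr, add_zero]
    exact dvd_add ((mem_range_iff p f hfx hft hp a).mp ha).2
      ((mem_range_iff p f hfx hft hp b).mp hb).2
  · intro hm
    refine ⟨inl z.left, ?_, 1, Subgroup.one_mem _, inr z.right, ?_, ?_⟩
    · rw [normalClosure_xE, MonoidHom.mem_ker]
      exact SemidirectProduct.rightHom_inl _
    · refine (mem_range_iff p f hfx hft hp _).mpr ⟨?_, ?_⟩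
      · intro j _
        rw [SemidirectProduct.left_inr, toAdd_one, Finsupp.zero_apply]
      · rw [SemidirectProduct.right_inr]
        exact hm
    · rw [one_mul, SemidirectProduct.inl_left_mul_inr_right]

include hfx hft in
lemma coset2_to (hp : p ≠ 0) (z : Hgrp) (hz : z ∉ f.range)
    (hex : ∃ k : ℤ, ∃ a ∈ f.range, ∃ b ∈ f.range, z = a * tE ^ k * b) :
    ¬ p ∣ toAdd z.right ∧
      (∀ j, toAdd z.left j ≠ 0 → p ∣ j ∨ p ∣ (j - toAdd z.right)) := by
  obtain ⟨k, a, ha, b, hb, rfl⟩ := hex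
  have hak := (mem_range_iff p f hfx hft hp a).mp ha
  have hbk := (mem_range_iff p f hfx hft hp b).mp hb
  have htr : toAdd ((tE ^ k : Hgrp).right) = k := by rw [tE_zpow]; rfl
  have htl : ∀ j, toAdd ((tE ^ k : Hgrp).left) j = 0 := by
    intro j
    rw [tE_zpow, SemidirectProduct.left_inr, toAdd_one, Finsupp.zero_apply]
  have hpk : ¬ p ∣ k := by
    rintro ⟨k', rfl⟩
    apply hz
    have htmem : (tE ^ (p * k') : Hgrp) ∈ f.range := by
      refine ⟨tE ^ k', ?_⟩
      rw [map_zpow, hft, ← zpow_mul, mul_comm]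
    exact Subgroup.mul_mem _ (Subgroup.mul_mem _ ha htmem) hb
  constructor
  · rw [mul3_right, htr]
    rintro ⟨q, hq⟩
    obtain ⟨qa, hqa⟩ := hak.2
    obtain ⟨qb, hqb⟩ := hbk.2
    exact hpk ⟨q - qa - qb, by linarith⟩
  · intro j hj
    rw [mul3_left, htl] at hj
    by_cases h1 : p ∣ j
    · exact Or.inl h1
    · right
      rw [mul3_right, htr]
      have ha0 : toAdd a.left j = 0 := hak.1 j h1
      rw [ha0] at hj
      have hb0 : toAdd b.left (j - toAdd a.right - toAdd ((tE ^ k : Hgrp)).right) ≠ 0 := by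
        intro h0
        rw [h0] at hj
        norm_num at hj
      have hdb : p ∣ (j - toAdd a.right - toAdd ((tE ^ k : Hgrp)).right) := by
        by_contra hdd
        exact hb0 (hbk.1 _ hdd)
      rw [htr] at hdb
      obtain ⟨qa, hqa⟩ := hak.2
      obtain ⟨qb, hqb⟩ := hbk.2
      obtain ⟨q, hq⟩ := hdb
      exact ⟨q - qb, by linarith⟩

include hfx hft in
lemma coset2_from (hp : p ≠ 0) (z : Hgrp) (hm : ¬ p ∣ toAdd z.right)
    (hsupp : ∀ j, toAdd z.left j ≠ 0 → p ∣ j ∨ p ∣ (j - toAdd z.right)) :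
    ∃ k : ℤ, ∃ a ∈ f.range, ∃ b ∈ f.range, z = a * tE ^ k * b := by
  classical
  set m := toAdd z.right with hmdef
  set c := toAdd z.left with hcdef
  set c₁ : ℤ →₀ ℤ := c.filter (fun j => p ∣ j) with hc₁
  set c₂ : ℤ →₀ ℤ := c.filter (fun j => ¬ p ∣ j) with hc₂
  set c₂' : ℤ →₀ ℤ := Finsupp.equivMapDomain (Equiv.addRight (-m)) c₂ with hc₂'
  have hc₂'ap : ∀ j, c₂' j = c₂ (j + m) := by
    intro j
    rw [hc₂', Finsupp.equivMapDomain_apply]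
    congr 1
    simp
  refine ⟨m, inl (ofAdd c₁), ?_, inl (ofAdd c₂'), ?_, ?_⟩
  · refine (mem_range_iff p f hfx hft hp _).mpr ⟨?_, ?_⟩
    · intro j hj
      show c₁ j = 0
      rw [hc₁, Finsupp.filter_apply_neg _ _ hj]
    · rw [SemidirectProduct.right_inl, toAdd_one]
      exact dvd_zero p
  · refine (mem_range_iff p f hfx hft hp _).mpr ⟨?_, ?_⟩
    · intro j hj
      show c₂' j = 0
      rw [hc₂'ap]
      by_cases hc : c (j + m) = 0
      · rw [hc₂, Finsupp.filter_apply]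
        split <;> simp [hc]
      · rcases hsupp (j + m) hc with h | h
        · rw [hc₂, Finsupp.filter_apply_neg]
          simpa using h
        · exfalso
          apply hj
          have : j + m - m = j := by ring
          rwa [this] at h
    · rw [SemidirectProduct.right_inl, toAdd_one]
      exact dvd_zero p
  · refine SemidirectProduct.ext ?_ ?_
    · apply Multiplicative.toAdd.injective
      ext j
      rw [mul3_left]
      rw [SemidirectProduct.left_inl, SemidirectProduct.right_inl, toAdd_one]
      rw [tE_zpow, SemidirectProduct.left_inr, SemidirectProduct.right_inr]
      show c j = c₁ j + toAdd (1 : Multiplicative (ℤ →₀ ℤ)) (j - 0) + c₂' (j - 0 - m)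
      rw [toAdd_one, Finsupp.zero_apply, hc₂'ap]
      have harg : j - 0 - m + m = j := by ring
      rw [harg]
      have : c₁ j + c₂ j = c j := by
        rw [hc₁, hc₂, ← Finsupp.add_apply, Finsupp.filter_pos_add_filter_neg c _]
      linarith [this]
    · apply Multiplicative.toAdd.injective
      rw [mul3_right, SemidirectProduct.right_inl, SemidirectProduct.right_inl, toAdd_one,
        tE_zpow, SemidirectProduct.right_inr]
      show m = 0 + m + 0
      ring

end

lemma conj_zpowers_iso (w : Hgrp) :
    Nonempty (↥(Subgroup.map (MulAut.conj w).toMonoidHom (Subgroup.zpowers tE))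
      ≃* Multiplicative ℤ) := by
  set ψ : Multiplicative ℤ →* Hgrp := (MulAut.conj w).toMonoidHom.comp (zpowersHom Hgrp tE)
    with hψdef
  have hψ : ∀ y : Multiplicative ℤ, ψ y = (MulAut.conj w) (tE ^ toAdd y) := fun y => rfl
  have hrange : ψ.range = Subgroup.map (MulAut.conj w).toMonoidHom (Subgroup.zpowers tE) := by
    ext g
    rw [Subgroup.mem_map]
    constructor
    · rintro ⟨y, rfl⟩
      exact ⟨tE ^ toAdd y, ⟨toAdd y, rfl⟩, (hψ y).symm⟩
    · rintro ⟨x, hx, rfl⟩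
      obtain ⟨k, rfl⟩ := Subgroup.mem_zpowers_iff.mp hx
      exact ⟨ofAdd k, by rw [hψ]; rfl⟩
  have hinj : Function.Injective ψ := by
    intro y y' h
    rw [hψ, hψ] at h
    have h2 := (MulAut.conj w).injective h
    rw [tE_zpow, tE_zpow] at h2
    have h3 := congrArg (fun u : Hgrp => toAdd u.right) h2
    simp only [SemidirectProduct.right_inr, toAdd_ofAdd] at h3
    exact Multiplicative.toAdd.injective h3
  exact ⟨(MulEquiv.subgroupCongr hrange.symm).trans
    (MonoidHom.ofInjective hinj).symm⟩

/-- Let `p ≠ 0`, `f_p : H → H` the homomorphism with `f_p x = x`,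
`f_p t = tᵖ`, `H_p = f_p(H)`, `H′` the normal closure of `x`, and for `z ∈ H` let
`Γ(z) = f_p⁻¹(z H_p z⁻¹)`.  For `z ∈ H ∖ H_p`: if `z ∈ H_p h H_p` for some `h ∈ H′` then
`Γ(z) = H′`; if `z ∈ H_p tᵏ H_p` for some `k ∈ ℤ` then `Γ(z)` is conjugate in `H` to the
cyclic subgroup generated by `t`; in all other cases `Γ(z)` is trivial.  In particular
`Γ(z)` is a free abelian group. -/
theorem gamma_description (p : ℤ) (hp : p ≠ 0) (f : Hgrp →* Hgrp)
    (hfx : f (xE 0) = xE 0) (hft : f tE = tE ^ p)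
    (H' : Subgroup Hgrp) (hH' : H' = Subgroup.normalClosure {xE 0})
    (z : Hgrp) (hz : z ∉ f.range)
    (Γ : Subgroup Hgrp)
    (hΓ : Γ = Subgroup.comap f (Subgroup.map (MulAut.conj z).toMonoidHom f.range)) :
    ((∃ h ∈ H', ∃ a ∈ f.range, ∃ b ∈ f.range, z = a * h * b) → Γ = H') ∧
    ((∃ k : ℤ, ∃ a ∈ f.range, ∃ b ∈ f.range, z = a * tE ^ k * b) →
      ∃ w : Hgrp, Γ = Subgroup.map (MulAut.conj w).toMonoidHom (Subgroup.zpowers tE)) ∧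
    ((¬ (∃ h ∈ H', ∃ a ∈ f.range, ∃ b ∈ f.range, z = a * h * b)) →
      (¬ (∃ k : ℤ, ∃ a ∈ f.range, ∃ b ∈ f.range, z = a * tE ^ k * b)) → Γ = ⊥) ∧
    (∃ ι : Type, Nonempty (↥Γ ≃* Multiplicative (ι →₀ ℤ))) := by
  subst hH'
  refine ⟨?_, ?_, ?_, ?_⟩
  · intro hex
    have hm : p ∣ toAdd z.right := (coset1_iff p f hfx hft hp z).mp hex
    rw [gamma_case1 p f hfx hft hp z hz hm Γ hΓ, normalClosure_xE]
  · intro hex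
    obtain ⟨hm, hsupp⟩ := coset2_to p f hfx hft hp z hz hex
    exact gamma_case2 p f hfx hft hp z hm hsupp Γ hΓ
  · intro h1 h2
    have hm : ¬ p ∣ toAdd z.right := fun hm =>
      h1 ((coset1_iff p f hfx hft hp z).mpr hm)
    have hns : ¬ ∀ j, toAdd z.left j ≠ 0 → p ∣ j ∨ p ∣ (j - toAdd z.right) := fun hs =>
      h2 (coset2_from p f hfx hft hp z hm hs)
    push_neg at hns
    obtain ⟨j₀, hj1, hj2, hj3⟩ := hns
    exact gamma_case3 p f hfx hft hp z hm j₀ hj2 hj3 hj1 Γ hΓ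
  · by_cases hm : p ∣ toAdd z.right
    · refine ⟨ℤ, ⟨?_⟩⟩
      have hΓ' : Γ = (inl : Multiplicative (ℤ →₀ ℤ) →* Hgrp).range := by
        rw [gamma_case1 p f hfx hft hp z hz hm Γ hΓ,
          SemidirectProduct.range_inl_eq_ker_rightHom]
      exact (MulEquiv.subgroupCongr hΓ').trans
        (MonoidHom.ofInjective SemidirectProduct.inl_injective).symm
    · by_cases hs : ∀ j, toAdd z.left j ≠ 0 → p ∣ j ∨ p ∣ (j - toAdd z.right)
      · obtain ⟨w, hw⟩ := gamma_case2 p f hfx hft hp z hm hs Γ hΓ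
        obtain ⟨e⟩ := conj_zpowers_iso w
        refine ⟨Unit, ⟨?_⟩⟩
        refine ((MulEquiv.subgroupCongr hw).trans e).trans ?_
        exact AddEquiv.toMultiplicative
          ((Finsupp.LinearEquiv.finsuppUnique ℤ ℤ Unit).toAddEquiv.symm)
      · push_neg at hs
        obtain ⟨j₀, hj1, hj2, hj3⟩ := hs
        have hbot : Γ = ⊥ := gamma_case3 p f hfx hft hp z hm j₀ hj2 hj3 hj1 Γ hΓ
        refine ⟨Empty, ⟨?_⟩⟩
        haveI : Unique (Empty →₀ ℤ) :=
          ⟨⟨0⟩, fun a => by ext j; exact j.elim⟩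
        haveI : Unique (Multiplicative (Empty →₀ ℤ)) := ‹Unique (Empty →₀ ℤ)›
        haveI : Unique ↥Γ := by
          rw [hbot]
          exact ⟨⟨1⟩, fun a => Subtype.ext (Subgroup.mem_bot.mp a.2)⟩
        exact MulEquiv.ofUnique
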